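/- arXiv:2303.10638 — 3 statements merged into one kernel-verified Lean document; each statement's English description precedes it below -/
import Mathlib

section
/- Let θ ∈ NHol(G) satisfy 1^θ = 1, and suppose η ∈ Aut(G/G') and τ ∈ Aut(G') satisfy (xG')^η = x^θ G' for all x ∈ G and z^τ = z^θ for all z ∈ G'. Then the pair (η, τ) belongs to Norm(Γ(G)), the normalizer of Γ(G) in Aut(G/G') × Aut(G'). -/
section Holomorph

variable (G : Type*) [Group G]

/-- The image of the right regular representation `ρ : G → Sym(G)`, `x^{ρ(y)} = x*y`,
as a subgroup of the permutation group of `G`. -/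
def rhoSubgroup : Subgroup (Equiv.Perm G) where
  carrier := {f | ∃ y : G, f = Equiv.mulRight y}
  one_mem' := ⟨1, Equiv.ext fun x => by simp⟩
  mul_mem' := by
    rintro f g ⟨a, rfl⟩ ⟨b, rfl⟩
    exact ⟨b * a, Equiv.ext fun x => by simp [mul_assoc]⟩
  inv_mem' := by
    rintro f ⟨a, rfl⟩
    exact ⟨a⁻¹, Equiv.ext fun x => by simp⟩

/-- The holomorph of `G`: the normalizer of `ρ(G)` in `Sym(G)`. -/
def Hol : Subgroup (Equiv.Perm G) := Subgroup.normalizer (rhoSubgroup G : Set (Equiv.Perm G))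

/-- The multiple holomorph of `G`: the normalizer of `Hol(G)` in `Sym(G)`. -/
def NHol : Subgroup (Equiv.Perm G) := Subgroup.normalizer (Hol G : Set (Equiv.Perm G))

instance : ((Hol G).subgroupOf (NHol G)).Normal := Subgroup.normal_in_normalizer

/-- `T(G) = NHol(G)/Hol(G)`. -/
abbrev TG := NHol G ⧸ (Hol G).subgroupOf (NHol G)


end Holomorph

section ClassTwo

variable (G : Type*) [Group G]

/-- `Γ(G)`: the image of the natural homomorphism
`Aut(G) → Aut(G/G') × Aut(G')` induced by restrictions, realized as the subgroup of pairs
`(η, τ)` that are simultaneously induced by a single automorphism `β` of `G`. -/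
def GammaG : Subgroup (MulAut (G ⧸ commutator G) × MulAut (commutator G)) where
  carrier := {q | ∃ β : MulAut G,
    (∀ x : G, q.1 (x : G ⧸ commutator G) = ((β x : G) : G ⧸ commutator G)) ∧
    (∀ z : commutator G, ((q.2 z : commutator G) : G) = β (z : G))}
  one_mem' := ⟨1, fun x => rfl, fun z => rfl⟩
  mul_mem' := by
    rintro a b ⟨β₁, h1q, h1z⟩ ⟨β₂, h2q, h2z⟩
    refine ⟨β₁ * β₂, fun x => ?_, fun z => ?_⟩
    · have : (a.1 * b.1) (x : G ⧸ commutator G) = a.1 (b.1 (x : G ⧸ commutator G)) := rfl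
      rw [Prod.fst_mul, this, h2q x, h1q (β₂ x)]
      rfl
    · have : (a.2 * b.2) z = a.2 (b.2 z) := rfl
      rw [Prod.snd_mul, this, h1z (b.2 z), h2z z]
      rfl
  inv_mem' := by
    rintro a ⟨β, hq, hz⟩
    refine ⟨β⁻¹, fun x => ?_, fun z => ?_⟩
    · have h1 : a.1 ((β⁻¹ x : G) : G ⧸ commutator G) = ((β (β⁻¹ x) : G) : G ⧸ commutator G) :=
        hq (β⁻¹ x)
      have h2 : β (β⁻¹ x) = x := by
        simp
      rw [h2] at h1
      rw [Prod.fst_inv, MulAut.inv_def, MulEquiv.symm_apply_eq]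
      rw [MulAut.inv_def]
      exact h1.symm
    · have h1 : ((a.2 (a.2⁻¹ z) : commutator G) : G) = β ((a.2⁻¹ z : commutator G) : G) :=
        hz (a.2⁻¹ z)
      have h2 : a.2 (a.2⁻¹ z) = z := by simp
      rw [h2] at h1
      rw [Prod.snd_inv, MulAut.inv_def, eq_comm, MulAut.inv_def, MulEquiv.symm_apply_eq]
      rw [MulAut.inv_def] at h1
      exact h1

end ClassTwo

/-!
Conjugation by `θ ∈ NHol(G)` maps `Hol(G)` to itself, and an element of `Hol(G)` fixing `1`
is an automorphism of `G`. So for `β ∈ Aut(G)` the permutation `θ β θ⁻¹` is again an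
automorphism, and it induces `(η, τ) · (β̄, β|G') · (η, τ)⁻¹`; doing the same with `θ⁻¹`
gives the reverse inclusion.
-/

section Restriction

variable {G : Type*} [Group G]

theorem MulAut.toPerm_mul_mulRight_mul_inv (β : MulAut G) (y : G) :
    MulAut.toPerm G β * Equiv.mulRight y * (MulAut.toPerm G β)⁻¹ = Equiv.mulRight (β y) := by
  ext x
  change β (β⁻¹ x * y) = x * β y
  simp

theorem MulAut.toPerm_mem_Hol (β : MulAut G) : MulAut.toPerm G β ∈ Hol G := by
  refine Subgroup.mem_normalizer_iff.mpr fun r => ⟨?_, ?_⟩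
  · rintro ⟨y, rfl⟩
    exact ⟨β y, toPerm_mul_mulRight_mul_inv β y⟩
  · rintro ⟨a, ha⟩
    refine ⟨β⁻¹ a, ?_⟩
    rw [← toPerm_mul_mulRight_mul_inv, ← ha, map_inv]
    group

theorem map_mul_of_mem_Hol {f : Equiv.Perm G} (hf : f ∈ Hol G) (h1 : f 1 = 1) (a b : G) :
    f (a * b) = f a * f b := by
  obtain ⟨c, hc⟩ := (Subgroup.mem_normalizer_iff.mp hf _).mp ⟨b, rfl⟩
  have key (x : G) : f (f⁻¹ x * b) = x * c := by
    simpa using congr($hc x)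
  have hb : f b = c := by
    simpa only [(Function.IsFixedPt.perm_inv h1).eq, one_mul] using key 1
  simpa [hb] using key (f a)

theorem exists_toPerm_eq_of_mem_Hol {f : Equiv.Perm G} (hf : f ∈ Hol G) (h1 : f 1 = 1) :
    ∃ β : MulAut G, MulAut.toPerm G β = f :=
  ⟨{ f with map_mul' := map_mul_of_mem_Hol hf h1 }, rfl⟩

def Equiv.Perm.Induces (f : Equiv.Perm G)
    (q : MulAut (G ⧸ commutator G) × MulAut (commutator G)) : Prop :=
  (∀ x : G, q.1 (x : G ⧸ commutator G) = ((f x : G) : G ⧸ commutator G)) ∧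
    (∀ z : commutator G, ((q.2 z : commutator G) : G) = f (z : G))

theorem mem_GammaG_iff {q : MulAut (G ⧸ commutator G) × MulAut (commutator G)} :
    q ∈ GammaG G ↔ ∃ β : MulAut G, (MulAut.toPerm G β).Induces q :=
  Iff.rfl

namespace Equiv.Perm.Induces

variable {f f' : Equiv.Perm G} {q q' : MulAut (G ⧸ commutator G) × MulAut (commutator G)}

theorem mul (h : f.Induces q) (h' : f'.Induces q') : (f * f').Induces (q * q') :=
  ⟨fun x => by simp [MulAut.mul_apply, h'.1, h.1], fun z => by simp [MulAut.mul_apply, h'.2, h.2]⟩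

theorem inv (h : f.Induces q) : f⁻¹.Induces q⁻¹ := by
  refine ⟨fun x => ?_, fun z => ?_⟩
  · rw [Prod.fst_inv, MulAut.inv_def, MulEquiv.symm_apply_eq, h.1, Equiv.Perm.inv_def,
      f.apply_symm_apply]
  · rw [Prod.snd_inv, MulAut.inv_def, Equiv.Perm.eq_inv_iff_eq, ← h.2, MulEquiv.apply_symm_apply]

theorem conj_mem_GammaG {θ : Equiv.Perm G} (hθ : θ ∈ NHol G) (hθ1 : θ 1 = 1)
    (hq : θ.Induces q) {g : MulAut (G ⧸ commutator G) × MulAut (commutator G)}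
    (hg : g ∈ GammaG G) : q * g * q⁻¹ ∈ GammaG G := by
  obtain ⟨β, hβ⟩ := mem_GammaG_iff.mp hg
  have hconj : θ * MulAut.toPerm G β * θ⁻¹ ∈ Hol G :=
    (Subgroup.mem_normalizer_iff.mp hθ _).mp β.toPerm_mem_Hol
  have hconj1 : θ (β (θ⁻¹ 1)) = 1 := by rw [Function.IsFixedPt.perm_inv hθ1, map_one, hθ1]
  obtain ⟨β', hβ'⟩ := exists_toPerm_eq_of_mem_Hol hconj hconj1
  exact mem_GammaG_iff.mpr ⟨β', hβ' ▸ (hq.mul hβ).mul hq.inv⟩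

end Equiv.Perm.Induces

end Restriction

theorem res_mem_normalizer_Gamma_general
    (G : Type*) [Group G]
    (θ : Equiv.Perm G) (hθ : θ ∈ NHol G) (hθ1 : θ 1 = 1)
    (η : MulAut (G ⧸ commutator G)) (τ : MulAut (commutator G))
    (hη : ∀ x : G, η (x : G ⧸ commutator G) = ((θ x : G) : G ⧸ commutator G))
    (hτ : ∀ z : commutator G, ((τ z : commutator G) : G) = θ (z : G)) :
    (η, τ) ∈ Subgroup.normalizer
      (GammaG G : Set (MulAut (G ⧸ commutator G) × MulAut (commutator G))) := by
  have hq : θ.Induces (η, τ) := ⟨hη, hτ⟩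
  refine Subgroup.mem_normalizer_iff.mpr fun g => ⟨hq.conj_mem_GammaG hθ hθ1, fun hg => ?_⟩
  have hback := hq.inv.conj_mem_GammaG (inv_mem hθ) (Function.IsFixedPt.perm_inv hθ1) hg
  simpa only [inv_inv, mul_assoc, inv_mul_cancel_left, mul_inv_cancel_left, inv_mul_cancel,
    mul_one] using hback

/-- Proposition: for `θ ∈ NHol(G)` with `1^θ = 1`, the pair of automorphisms of `G/G'` and `G'`
induced by restriction of `θ` lies in the normalizer of `Γ(G)`. -/
theorem res_mem_normalizer_Gamma
    (p : ℕ) (hp : p.Prime) (hodd : Odd p)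
    (G : Type*) [Group G] [Finite G] (hpG : IsPGroup p G)
    (hcomm : commutator G = Subgroup.center G) (hnontriv : commutator G ≠ ⊥)
    (θ : Equiv.Perm G) (hθ : θ ∈ NHol G) (hθ1 : θ 1 = 1)
    (η : MulAut (G ⧸ commutator G)) (τ : MulAut (commutator G))
    (hη : ∀ x : G, η (x : G ⧸ commutator G) = ((θ x : G) : G ⧸ commutator G))
    (hτ : ∀ z : commutator G, ((τ z : commutator G) : G) = θ (z : G)) :
    (η, τ) ∈ Subgroup.normalizer
      (GammaG G : Set (MulAut (G ⧸ commutator G) × MulAut (commutator G))) :=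
  res_mem_normalizer_Gamma_general G θ hθ hθ1 η τ hη hτ
end

section
/- Assume the Assumption holds. Let θ1, θ2 ∈ NHol(G) with 1^{θ2} = 1, let Δ1, Δ2, Δ3 ∈ B satisfy θ1⁻¹ρ(G)θ1 = N_{Δ1}, θ2⁻¹ρ(G)θ2 = N_{Δ2} and (θ1θ2)⁻¹ρ(G)(θ1θ2) = N_{Δ3}, and let η ∈ Aut(G/G') and τ ∈ Aut(G') be the automorphisms induced by θ2, i.e., (xG')^η = x^{θ2}G' for all x ∈ G and z^τ = z^{θ2} for all z ∈ G'. Then Δ3(u, v) = Δ1(u^{η⁻¹}, v^{η⁻¹})^τ · Δ2(u, v) for all u, v ∈ G/G'. -/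
section BForms2
variable (G : Type*) [Group G]

/-- Membership in `B`: `Δ : G/G' × G/G' → G'` is bilinear and `Aut(G)`-equivariant,
i.e. `Δ(u^β̄, v^β̄) = Δ(u,v)^β` for all `β ∈ Aut(G)`. -/
def MemB (Δ : G ⧸ commutator G → G ⧸ commutator G → commutator G) : Prop :=
  (∀ u u' v : G ⧸ commutator G, Δ (u * u') v = Δ u v * Δ u' v) ∧
  (∀ u v v' : G ⧸ commutator G, Δ u (v * v') = Δ u v * Δ u v') ∧
  (∀ (β : MulAut G) (x y : G),
    ((Δ ((β x : G) : G ⧸ commutator G) ((β y : G) : G ⧸ commutator G) : commutator G) : G) =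
      β ((Δ (x : G ⧸ commutator G) (y : G ⧸ commutator G) : commutator G) : G))

end BForms2


section AutC

variable (G : Type*) [Group G]

lemma center_map_eq (β : MulAut G) :
    (Subgroup.center G).map β.toMonoidHom = Subgroup.center G :=
  Subgroup.characteristic_iff_map_eq.mp Subgroup.centerCharacteristic β

/-- The natural homomorphism `Aut(G) → Aut(G/Z(G))`. -/
def autToQuotCenter : MulAut G →* MulAut (G ⧸ Subgroup.center G) where
  toFun β := QuotientGroup.congr (Subgroup.center G) (Subgroup.center G) β (center_map_eq G β)
  map_one' := by
    ext q
    induction q using QuotientGroup.induction_on with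
    | _ x => rfl
  map_mul' β₁ β₂ := by
    ext q
    induction q using QuotientGroup.induction_on with
    | _ x => rfl

/-- `Aut_c(G)`: the kernel of the natural homomorphism `Aut(G) → Aut(G/Z(G))`;
the quotient `MulAut G ⧸ AutcKer G` is then `Aut^c(G)`. -/
def AutcKer : Subgroup (MulAut G) := (autToQuotCenter G).ker

instance : (AutcKer G).Normal := by unfold AutcKer; infer_instance


/-- The Assumption: there is no non-trivial `Aut^c(G)`-equivariant homomorphism
`G/G' → Aut^c(G)`. -/
def AssumptionHolds : Prop :=
  ∀ f : (G ⧸ commutator G) →* (MulAut G ⧸ AutcKer G),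
    (∀ (β : MulAut G) (x : G),
      f ((β x : G) : G ⧸ commutator G) =
        (QuotientGroup.mk β)⁻¹ * f (x : G ⧸ commutator G) * QuotientGroup.mk β) →
    ∀ v : G ⧸ commutator G, f v = 1

end AutC

section NDelta

variable (G : Type*) [Group G]

/-- The set of maps underlying `N_Δ = {γ_Δ(y)ρ(y) : y ∈ G}`, where
`x^{γ_Δ(y)} = x·Δ(xG', yG')`; with maps composed left to right,
`x^{γ_Δ(y)ρ(y)} = (x·Δ(xG', yG'))·y`. -/
def NDeltaSet (Δ : G ⧸ commutator G → G ⧸ commutator G → commutator G) : Set (G → G) :=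
  {f | ∃ y : G, f = fun x : G =>
    x * ((Δ (QuotientGroup.mk x) (QuotientGroup.mk y) : commutator G) : G) * y}

/-- The set of maps underlying `θ⁻¹ρ(G)θ` (maps composed left to right):
`x^{θ⁻¹ρ(y)θ} = θ(θ⁻¹(x)·y)`. -/
def conjRhoSet (θ : Equiv.Perm G) : Set (G → G) :=
  {f | ∃ y : G, f = fun x => θ (θ.symm x * y)}

end NDelta

/-! Since `θ2` fixes `1`, the equality `θ2⁻¹ρ(G)θ2 = N_{Δ2}` evaluated at `1` makes `θ2` a
twisted homomorphism, `(xy)^{θ2} = x^{θ2} Δ2(x^{θ2}G', y^{θ2}G') y^{θ2}`, acting on the central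
subgroup `G'` as `τ`. Consequently `θ2` conjugates `γ_{Δ1}(y)ρ(y) ∈ N_{Δ1} = θ1⁻¹ρ(G)θ1` to
`γ_D(y^{θ2})ρ(y^{θ2})` with `D(u, v) = Δ1(u^{η⁻¹}, v^{η⁻¹})^τ Δ2(u, v)`, and this map lies in
`(θ1θ2)⁻¹ρ(G)(θ1θ2) = N_{Δ3}`. A map `x ↦ x Δ(xG', yG') y` determines `y` (evaluate at `1`) and
then `Δ(·, yG')`, so `Δ3 = D`. -/

section DeltaMulRule

open QuotientGroup

variable {G : Type*} [Group G]

lemma eq_one_of_map_mul_left {Q A : Type*} [Group Q] [Group A] {Δ : Q → Q → A}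
    (h : ∀ u u' v, Δ (u * u') v = Δ u v * Δ u' v) (v : Q) : Δ 1 v = 1 :=
  (MonoidHom.mk' (Δ · v) (h · · v)).map_one

lemma eq_and_eq_of_forall_mul_mul_eq {a b : G → G} {y y' : G}
    (h : ∀ x, x * a x * y = x * b x * y') (ha : a 1 = 1) (hb : b 1 = 1) :
    y = y' ∧ ∀ x, a x = b x := by
  have hy : y = y' := by simpa [ha, hb] using h 1
  exact ⟨hy, fun x => mul_left_cancel (mul_right_cancel (hy ▸ h x))⟩

variable {θ : Equiv.Perm G} {Δ : G ⧸ commutator G → G ⧸ commutator G → commutator G}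

lemma exists_forall_conj_eq_of_conjRhoSet_eq (hc : conjRhoSet G θ = NDeltaSet G Δ) (y : G) :
    ∃ y' : G, ∀ x : G,
      θ (θ.symm x * y) = x * (Δ (x : G ⧸ commutator G) (y' : G ⧸ commutator G) : G) * y' := by
  obtain ⟨y', hy'⟩ : (fun x => θ (θ.symm x * y)) ∈ NDeltaSet G Δ := hc ▸ ⟨y, rfl⟩
  exact ⟨y', congrFun hy'⟩

lemma exists_forall_eq_conj_of_conjRhoSet_eq (hc : conjRhoSet G θ = NDeltaSet G Δ) (y' : G) :
    ∃ y : G, ∀ x : G,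
      θ (θ.symm x * y) = x * (Δ (x : G ⧸ commutator G) (y' : G ⧸ commutator G) : G) * y' := by
  obtain ⟨y, hy⟩ : (fun x : G => x * (Δ (x : G ⧸ commutator G) (y' : G ⧸ commutator G) : G) * y')
      ∈ conjRhoSet G θ := hc ▸ ⟨y', rfl⟩
  exact ⟨y, fun x => (congrFun hy x).symm⟩

lemma map_mul_of_conjRhoSet_eq (hc : conjRhoSet G θ = NDeltaSet G Δ) (hθ1 : θ 1 = 1)
    (hΔ : ∀ v, Δ 1 v = 1) (a b : G) :
    θ (a * b) = θ a * (Δ (θ a : G ⧸ commutator G) (θ b : G ⧸ commutator G) : G) * θ b := by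
  obtain ⟨b', hb'⟩ := exists_forall_conj_eq_of_conjRhoSet_eq hc b
  have hb : θ b = b' := by
    simpa [θ.symm_apply_eq.mpr hθ1.symm, hΔ] using hb' 1
  simpa [hb] using hb' (θ a)

lemma map_mul_mul_of_conjRhoSet_eq (hc : conjRhoSet G θ = NDeltaSet G Δ) (hθ1 : θ 1 = 1)
    (hΔ : ∀ v, Δ 1 v = 1) (a b : G) {z : G} (hz : θ z ∈ commutator G) :
    θ (a * z * b) =
      θ a * (Δ (θ a : G ⧸ commutator G) (θ b : G ⧸ commutator G) : G) * θ z * θ b := by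
  have hzb : θ (z * b) = θ z * θ b := by
    simp [map_mul_of_conjRhoSet_eq hc hθ1 hΔ, (eq_one_iff _).mpr hz, hΔ]
  rw [mul_assoc, map_mul_of_conjRhoSet_eq hc hθ1 hΔ, hzb, mk_mul, (eq_one_iff _).mpr hz, one_mul]
  simp only [mul_assoc]

lemma conj_NDelta_apply (hcent : commutator G ≤ Subgroup.center G)
    (hc : conjRhoSet G θ = NDeltaSet G Δ) (hθ1 : θ 1 = 1) (hΔ : ∀ v, Δ 1 v = 1)
    {η : MulAut (G ⧸ commutator G)} {τ : MulAut (commutator G)}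
    (hη : ∀ x : G, η (x : G ⧸ commutator G) = ((θ x : G) : G ⧸ commutator G))
    (hτ : ∀ z : commutator G, ((τ z : commutator G) : G) = θ (z : G))
    (Δ' : G ⧸ commutator G → G ⧸ commutator G → commutator G) (x y : G) :
    θ (θ.symm x * (Δ' (θ.symm x : G ⧸ commutator G) (y : G ⧸ commutator G) : G) * y) =
      x * (τ (Δ' (η⁻¹ x) y) * Δ (x : G ⧸ commutator G) (η y) : commutator G) * θ y := by
  have hηx : η⁻¹ (x : G ⧸ commutator G) = (θ.symm x : G ⧸ commutator G) :=
    η.injective (by rw [MulAut.apply_inv_self, hη, θ.apply_symm_apply])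
  rw [hηx]
  set z := Δ' (θ.symm x : G ⧸ commutator G) (y : G ⧸ commutator G)
  have hz : θ z ∈ commutator G := hτ z ▸ (τ z).2
  rw [map_mul_mul_of_conjRhoSet_eq hc hθ1 hΔ _ _ hz, θ.apply_symm_apply, ← hτ, ← hη y,
    Subgroup.coe_mul, mul_assoc x, Subgroup.mem_center_iff.mp (hcent (τ z).2)]

end DeltaMulRule

theorem Delta_mul_rule_general
    (G : Type*) [Group G]
    (hcomm : commutator G = Subgroup.center G)
    (θ1 θ2 : Equiv.Perm G) (hθ21 : θ2 1 = 1)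
    (Δ1 Δ2 Δ3 : G ⧸ commutator G → G ⧸ commutator G → commutator G)
    (hΔ1 : MemB G Δ1) (hΔ2 : MemB G Δ2) (hΔ3 : MemB G Δ3)
    (hc1 : conjRhoSet G θ1 = NDeltaSet G Δ1)
    (hc2 : conjRhoSet G θ2 = NDeltaSet G Δ2)
    (hc3 : conjRhoSet G (θ1.trans θ2) = NDeltaSet G Δ3)
    (η : MulAut (G ⧸ commutator G)) (τ : MulAut (commutator G))
    (hη : ∀ x : G, η (x : G ⧸ commutator G) = ((θ2 x : G) : G ⧸ commutator G))
    (hτ : ∀ z : commutator G, ((τ z : commutator G) : G) = θ2 (z : G)) :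
    ∀ u v : G ⧸ commutator G, Δ3 u v = τ (Δ1 (η⁻¹ u) (η⁻¹ v)) * Δ2 u v := by
  intro u v
  have hΔ1one := eq_one_of_map_mul_left hΔ1.1
  have hΔ2one := eq_one_of_map_mul_left hΔ2.1
  have hΔ3one := eq_one_of_map_mul_left hΔ3.1
  obtain ⟨y1, hy1⟩ := QuotientGroup.mk_surjective (η⁻¹ v)
  obtain ⟨y, hy⟩ := exists_forall_eq_conj_of_conjRhoSet_eq hc1 y1
  obtain ⟨y3, hy3⟩ := exists_forall_conj_eq_of_conjRhoSet_eq hc3 y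
  have key : ∀ x : G, x * (Δ3 x y3 : G) * y3 =
      x * (τ (Δ1 (η⁻¹ x) y1) * Δ2 x (η y1) : commutator G) * θ2 y1 := fun x => by
    rw [← hy3, ← conj_NDelta_apply hcomm.le hc2 hθ21 hΔ2one hη hτ, ← hy]
    rfl
  obtain ⟨rfl, hΔ⟩ := eq_and_eq_of_forall_mul_mul_eq key (by simp [hΔ3one])
    (by simp [hΔ1one, hΔ2one])
  obtain ⟨x, rfl⟩ := QuotientGroup.mk_surjective u
  have hv : ((θ2 y1 : G) : G ⧸ commutator G) = v := by rw [← hη, hy1, MulAut.apply_inv_self]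
  simpa [hv, hy1] using Subtype.ext (hΔ x)

/-- Proposition (multiplication rule): `Δ_{θ1θ2} = Δ_{θ1}^{res(θ2)} · Δ_{θ2}`. -/
theorem Delta_mul_rule
    (p : ℕ) (hp : p.Prime) (hodd : Odd p)
    (G : Type*) [Group G] [Finite G] (hpG : IsPGroup p G)
    (hcomm : commutator G = Subgroup.center G) (hnontriv : commutator G ≠ ⊥)
    (hAss : AssumptionHolds G)
    (θ1 θ2 : Equiv.Perm G) (hθ1 : θ1 ∈ NHol G) (hθ2 : θ2 ∈ NHol G) (hθ21 : θ2 1 = 1)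
    (Δ1 Δ2 Δ3 : G ⧸ commutator G → G ⧸ commutator G → commutator G)
    (hΔ1 : MemB G Δ1) (hΔ2 : MemB G Δ2) (hΔ3 : MemB G Δ3)
    (hc1 : conjRhoSet G θ1 = NDeltaSet G Δ1)
    (hc2 : conjRhoSet G θ2 = NDeltaSet G Δ2)
    (hc3 : conjRhoSet G (θ1.trans θ2) = NDeltaSet G Δ3)
    (η : MulAut (G ⧸ commutator G)) (τ : MulAut (commutator G))
    (hη : ∀ x : G, η (x : G ⧸ commutator G) = ((θ2 x : G) : G ⧸ commutator G))
    (hτ : ∀ z : commutator G, ((τ z : commutator G) : G) = θ2 (z : G)) :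
    ∀ u v : G ⧸ commutator G, Δ3 u v = τ (Δ1 (η⁻¹ u) (η⁻¹ v)) * Δ2 u v :=
  Delta_mul_rule_general G hcomm θ1 θ2 hθ21 Δ1 Δ2 Δ3 hΔ1 hΔ2 hΔ3 hc1 hc2 hc3 η τ hη hτ
end

section
/- Assume the Assumption holds. Let θ ∈ NHol(G) with 1^θ = 1, let Δ ∈ B satisfy θ⁻¹ρ(G)θ = N_Δ, and let η ∈ Aut(G/G') and τ ∈ Aut(G') be the automorphisms induced by θ, i.e., (xG')^η = x^θ G' for all x ∈ G and z^τ = z^θ for all z ∈ G'. Then Δ is symmetric (Δ(u, v) = Δ(v, u) for all u, v ∈ G/G') if and only if (η, τ) ∈ Γ(G). -/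
/-!
Because `θ` fixes `1`, the equality `θ⁻¹ρ(G)θ = N_Δ` says `θ(xy) = θ(x)·Δ(θx, θy)·θ(y)`:
`θ` is a homomorphism twisted by the central bilinear form `Δ`.

If `Δ` is symmetric then, `G'` having odd order, `q(u) = Δ(u, u)^{1/2}` satisfies
`q(uv) = q(u)q(v)Δ(u, v)`, so `g ↦ θ(g)·q(θg)⁻¹` is an automorphism of `G`; it agrees with `θ`
modulo `G'`, and on `G'` because there the correction is `q(1) = 1`.

Conversely, if an automorphism `β` agrees with `θ` modulo `G'` and on `G'`, then `E(x) = β(x)⁻¹θ(x)`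
is central with `E(xy) = E(x)E(y)Δ(θx, θy)` and `E([x, y]) = 1`. Hence
`E(xy) = E([x, y]·yx) = E(yx)`, which is the symmetry of `Δ`.
-/

theorem apply_one_left_eq_one {V A : Type*} [Monoid V] [Group A] {b : V → V → A}
    (hb : ∀ u u' v, b (u * u') v = b u v * b u' v) (v : V) : b 1 v = 1 := by
  simpa using hb 1 1 v

theorem exists_pow_two_mul_eq_self {A : Type*} [Group A] (h : Odd (Nat.card A)) :
    ∃ m : ℕ, ∀ a : A, a ^ (2 * m) = a := by
  obtain ⟨j, hj⟩ := h
  refine ⟨j + 1, fun a => ?_⟩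
  rw [show 2 * (j + 1) = Nat.card A + 1 by omega, pow_succ, pow_card_eq_one', one_mul]

open scoped IsMulCommutative in
theorem diag_pow_mul_eq {V A : Type*} [Mul V] [Group A] [IsMulCommutative A] {b : V → V → A}
    (hl : ∀ u u' v, b (u * u') v = b u v * b u' v) (hr : ∀ u v v', b u (v * v') = b u v * b u v')
    (hsymm : ∀ u v, b u v = b v u) {m : ℕ} (hm : ∀ a : A, a ^ (2 * m) = a) (u v : V) :
    b (u * v) (u * v) ^ m = b u u ^ m * b v v ^ m * b u v := by
  calc b (u * v) (u * v) ^ m = b u u ^ m * b v v ^ m * b u v ^ (2 * m) := by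
        rw [hl, hr, hr, hsymm v u, two_mul, pow_add]
        simp only [mul_pow]
        ac_rfl
    _ = b u u ^ m * b v v ^ m * b u v := by rw [hm]

theorem mul_mul_mul_inv_eq_of_mem_center {G : Type*} [Group G] {a b c₁ c₂ d : G}
    (hc₁ : c₁ ∈ Subgroup.center G) (hd : d ∈ Subgroup.center G) :
    a * d * b * (c₁ * c₂ * d)⁻¹ = a * c₁⁻¹ * (b * c₂⁻¹) := by
  have hd' := Subgroup.mem_center_iff.mp hd b
  have hc₁' := Subgroup.mem_center_iff.mp (inv_mem hc₁) (b * c₂⁻¹)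
  calc a * d * b * (c₁ * c₂ * d)⁻¹ = a * (d * b) * d⁻¹ * c₂⁻¹ * c₁⁻¹ := by group
    _ = a * ((b * c₂⁻¹) * c₁⁻¹) := by rw [← hd']; group
    _ = a * c₁⁻¹ * (b * c₂⁻¹) := by rw [hc₁', mul_assoc]

section TwistedHom

variable {G : Type*} [Group G] {Δ : G ⧸ commutator G → G ⧸ commutator G → commutator G}

def IsTwistedHom (Δ : G ⧸ commutator G → G ⧸ commutator G → commutator G) (θ : G → G) : Prop :=
  ∀ x y, θ (x * y) = θ x * Δ (θ x) (θ y) * θ y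

theorem isTwistedHom_of_conjRhoSet_eq {θ : Equiv.Perm G} (hΔ1 : ∀ v, Δ 1 v = 1) (hθ1 : θ 1 = 1)
    (hc : conjRhoSet G θ = NDeltaSet G Δ) : IsTwistedHom Δ θ := by
  intro x y
  obtain ⟨y', hy'⟩ : (fun x => θ (θ.symm x * y)) ∈ NDeltaSet G Δ := hc ▸ ⟨y, rfl⟩
  obtain rfl : θ y = y' := by
    simpa [θ.symm_apply_eq.mpr hθ1.symm, hΔ1] using congrFun hy' 1
  simpa using congrFun hy' (θ x)

namespace IsTwistedHom

variable {θ : G → G}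

theorem mk_apply_mul (hθ : IsTwistedHom Δ θ) (x y : G) :
    (θ (x * y) : G ⧸ commutator G) = θ x * θ y := by
  rw [hθ, QuotientGroup.mk_mul, QuotientGroup.mk_mul_of_mem _ (Δ _ _).2]

theorem mul_inv_apply_mul (hθ : IsTwistedHom Δ θ) (hG' : commutator G ≤ Subgroup.center G)
    {q : G ⧸ commutator G → commutator G} (hq : ∀ u v, q (u * v) = q u * q v * Δ u v) (x y : G) :
    θ (x * y) * (q (θ (x * y)) : G)⁻¹ = θ x * (q (θ x) : G)⁻¹ * (θ y * (q (θ y) : G)⁻¹) := by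
  rw [hθ.mk_apply_mul, hq, Subgroup.coe_mul, Subgroup.coe_mul, hθ x y]
  exact mul_mul_mul_inv_eq_of_mem_center (hG' (q _).2) (hG' (Δ _ _).2)

theorem exists_mulAut [Finite G] {θ : Equiv.Perm G} (hθ : IsTwistedHom Δ θ)
    (hG' : commutator G ≤ Subgroup.center G) (hodd : Odd (Nat.card (commutator G)))
    (hl : ∀ u u' v, Δ (u * u') v = Δ u v * Δ u' v) (hr : ∀ u v v', Δ u (v * v') = Δ u v * Δ u v')
    (hsymm : ∀ u v, Δ u v = Δ v u) (hθG' : ∀ z ∈ commutator G, θ z ∈ commutator G) :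
    ∃ β : MulAut G, (∀ x, (β x : G ⧸ commutator G) = θ x) ∧ ∀ z ∈ commutator G, β z = θ z := by
  have : IsMulCommutative (commutator G) :=
    .of_setLike_mul_comm fun a _ _ hb => Subgroup.mem_center_iff.mp (hG' hb) a
  obtain ⟨m, hm⟩ := exists_pow_two_mul_eq_self hodd
  let F : G →* G := MonoidHom.mk' (fun g => θ g * ((Δ (θ g) (θ g) ^ m : commutator G) : G)⁻¹)
    (hθ.mul_inv_apply_mul hG' (q := fun u => Δ u u ^ m) (diag_pow_mul_eq hl hr hsymm hm))
  have hF : ∀ g, (F g : G ⧸ commutator G) = θ g := fun g =>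
    QuotientGroup.mk_mul_of_mem _ (inv_mem (Δ _ _ ^ m).2)
  have hF_inj : Function.Injective F := by
    intro g g' h
    have hmk : (θ g : G ⧸ commutator G) = θ g' := by rw [← hF, ← hF, h]
    have h' : θ g * ((Δ (θ g) (θ g) ^ m : commutator G) : G)⁻¹ =
        θ g' * ((Δ (θ g') (θ g') ^ m : commutator G) : G)⁻¹ := h
    rw [hmk] at h'
    exact θ.injective (mul_right_cancel h')
  refine ⟨MulEquiv.ofBijective F (Finite.injective_iff_bijective.mp hF_inj), hF, fun z hz => ?_⟩
  change θ z * _ = θ z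
  rw [(QuotientGroup.eq_one_iff _).mpr (hθG' z hz), apply_one_left_eq_one hl]
  simp

open scoped commutatorElement in
theorem symm_of_monoidHom {θ : Equiv.Perm G} (hθ : IsTwistedHom Δ θ)
    (hG' : commutator G ≤ Subgroup.center G) (hΔ1 : ∀ v, Δ 1 v = 1) (β : G →* G)
    (hβq : ∀ x, (β x : G ⧸ commutator G) = θ x) (hβz : ∀ z ∈ commutator G, β z = θ z)
    (u v : G ⧸ commutator G) : Δ u v = Δ v u := by
  set E : G → G := fun x => (β x)⁻¹ * θ x
  have hE_central : ∀ x g, g * E x = E x * g := fun x =>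
    Subgroup.mem_center_iff.mp (hG' (QuotientGroup.eq.mp (hβq x)))
  have hE_mul : ∀ x y, E (x * y) = E x * E y * Δ (θ x) (θ y) := by
    intro x y
    have hc : E x * Δ (θ x) (θ y) ∈ Subgroup.center G :=
      mul_mem (Subgroup.mem_center_iff.mpr (hE_central x)) (hG' (Δ _ _).2)
    calc E (x * y) = (β y)⁻¹ * (E x * Δ (θ x) (θ y)) * θ y := by
          simp only [E, map_mul, hθ x y]; group
      _ = E x * (Δ (θ x) (θ y) * E y) := by
          rw [Subgroup.mem_center_iff.mp hc]; simp only [E]; group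
      _ = E x * E y * Δ (θ x) (θ y) := by
          rw [hE_central y]; exact (mul_assoc _ _ _).symm
  have hE_comm : ∀ x y, E (x * y) = E (y * x) := by
    intro x y
    have hmem : ⁅x, y⁆ ∈ commutator G :=
      Subgroup.commutator_mem_commutator (Subgroup.mem_top x) (Subgroup.mem_top y)
    have hθc : θ ⁅x, y⁆ = β ⁅x, y⁆ := (hβz _ hmem).symm
    have hmk : (θ ⁅x, y⁆ : G ⧸ commutator G) = 1 := by
      rw [QuotientGroup.eq_one_iff, hθc, map_commutatorElement]
      exact Subgroup.commutator_mem_commutator (Subgroup.mem_top _) (Subgroup.mem_top _)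
    have hE1 : E ⁅x, y⁆ = 1 := by simp only [E, hθc, inv_mul_cancel]
    rw [show x * y = ⁅x, y⁆ * (y * x) by group, hE_mul, hE1, hmk, hΔ1]
    simp
  have hΔθ : ∀ x y, Δ (θ x) (θ y) = Δ (θ y) (θ x) := by
    intro x y
    have h := (hE_mul x y).symm.trans ((hE_comm x y).trans (hE_mul y x))
    rw [hE_central y (E x)] at h
    exact Subtype.ext (mul_left_cancel h)
  obtain ⟨g, rfl⟩ := QuotientGroup.mk_surjective u
  obtain ⟨h, rfl⟩ := QuotientGroup.mk_surjective v
  simpa using hΔθ (θ.symm g) (θ.symm h)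

end IsTwistedHom

end TwistedHom

theorem symmetric_iff_res_mem_Gamma_general
    (p : ℕ) (hp : p.Prime) (hodd : Odd p)
    (G : Type*) [Group G] [Finite G] (hpG : IsPGroup p G)
    (hcomm : commutator G = Subgroup.center G)
    (θ : Equiv.Perm G) (hθ1 : θ 1 = 1)
    (Δ : G ⧸ commutator G → G ⧸ commutator G → commutator G)
    (hΔ : MemB G Δ) (hc : conjRhoSet G θ = NDeltaSet G Δ)
    (η : MulAut (G ⧸ commutator G)) (τ : MulAut (commutator G))
    (hη : ∀ x : G, η (x : G ⧸ commutator G) = ((θ x : G) : G ⧸ commutator G))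
    (hτ : ∀ z : commutator G, ((τ z : commutator G) : G) = θ (z : G)) :
    (∀ u v : G ⧸ commutator G, Δ u v = Δ v u) ↔ (η, τ) ∈ GammaG G := by
  obtain ⟨hl, hr, -⟩ := hΔ
  have hΔ1 := apply_one_left_eq_one hl
  have hθΔ : IsTwistedHom Δ θ := isTwistedHom_of_conjRhoSet_eq hΔ1 hθ1 hc
  constructor
  · intro hsymm
    have : Fact p.Prime := ⟨hp⟩
    obtain ⟨k, hk⟩ := IsPGroup.iff_card.mp (hpG.to_subgroup (commutator G))
    have hθG' : ∀ z ∈ commutator G, θ z ∈ commutator G := fun z hz =>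
      hτ ⟨z, hz⟩ ▸ (τ ⟨z, hz⟩).2
    obtain ⟨β, hβq, hβz⟩ :=
      hθΔ.exists_mulAut hcomm.le (hk ▸ hodd.pow) hl hr hsymm hθG'
    exact ⟨β, fun x => (hη x).trans (hβq x).symm, fun z => (hτ z).trans (hβz z z.2).symm⟩
  · rintro ⟨β, hβq, hβz⟩
    exact hθΔ.symm_of_monoidHom hcomm.le hΔ1 β (fun x => (hβq x).symm.trans (hη x))
      fun z hz => (hβz ⟨z, hz⟩).symm.trans (hτ ⟨z, hz⟩)

/-- Proposition (kernel description): under the Assumption, for `θ ∈ NHol(G)` fixing `1`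
with `θ⁻¹ρ(G)θ = N_Δ`, the form `Δ` is symmetric if and only if the pair of automorphisms
induced by `θ` on `G/G'` and `G'` lies in `Γ(G)`. -/
theorem symmetric_iff_res_mem_Gamma
    (p : ℕ) (hp : p.Prime) (hodd : Odd p)
    (G : Type*) [Group G] [Finite G] (hpG : IsPGroup p G)
    (hcomm : commutator G = Subgroup.center G) (hnontriv : commutator G ≠ ⊥)
    (hAss : AssumptionHolds G)
    (θ : Equiv.Perm G) (hθ : θ ∈ NHol G) (hθ1 : θ 1 = 1)
    (Δ : G ⧸ commutator G → G ⧸ commutator G → commutator G)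
    (hΔ : MemB G Δ) (hc : conjRhoSet G θ = NDeltaSet G Δ)
    (η : MulAut (G ⧸ commutator G)) (τ : MulAut (commutator G))
    (hη : ∀ x : G, η (x : G ⧸ commutator G) = ((θ x : G) : G ⧸ commutator G))
    (hτ : ∀ z : commutator G, ((τ z : commutator G) : G) = θ (z : G)) :
    (∀ u v : G ⧸ commutator G, Δ u v = Δ v u) ↔ (η, τ) ∈ GammaG G :=
  symmetric_iff_res_mem_Gamma_general p hp hodd G hpG hcomm θ hθ1 Δ hΔ hc η τ hη hτ
end
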